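/- For each λ₀ ∈ ℂ: (i) there is a left A_P-module structure on ℂ in which y acts as multiplication by λ₀ and x, x_α, x_{−α}, x_β, x_{α+β} all act as 0; (ii) there is a left A_P-module structure on ℂ² with basis e⁺, e⁻ in which x·e⁺ = e⁺, x·e⁻ = −e⁻, y·e⁺ = (λ₀ − 1/2)e⁺, y·e⁻ = (λ₀ + 1/2)e⁻, x_α·e⁺ = 0, x_α·e⁻ = e⁺, x_{−α}·e⁺ = e⁻, x_{−α}·e⁻ = 0, and x_β, x_{α+β} act as 0. Both modules are simple, and these modules are pairwise non-isomorphic as λ₀ ranges over ℂ and the type (i) or (ii) varies. -/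

import Mathlib

noncomputable section

/-- Generator `x` of the free algebra on six generators. -/
def XG : FreeAlgebra ℂ (Fin 6) := FreeAlgebra.ι ℂ 0
/-- Generator `y`. -/
def YG : FreeAlgebra ℂ (Fin 6) := FreeAlgebra.ι ℂ 1
/-- Generator `x_α`. -/
def XaG : FreeAlgebra ℂ (Fin 6) := FreeAlgebra.ι ℂ 2
/-- Generator `x_{−α}`. -/
def XmaG : FreeAlgebra ℂ (Fin 6) := FreeAlgebra.ι ℂ 3
/-- Generator `x_β`. -/
def XbG : FreeAlgebra ℂ (Fin 6) := FreeAlgebra.ι ℂ 4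
/-- Generator `x_{α+β}`. -/
def XabG : FreeAlgebra ℂ (Fin 6) := FreeAlgebra.ι ℂ 5

/-- The defining relations of the algebra `A_P` (Theorem 4.10 of the paper). -/
inductive relP : FreeAlgebra ℂ (Fin 6) → FreeAlgebra ℂ (Fin 6) → Prop
  | r1 : relP (XG * XaG) XaG
  | r2 : relP (XaG * XG) (-XaG)
  | r3 : relP (XG * XmaG) (-XmaG)
  | r4 : relP (XmaG * XG) XmaG
  | r5 : relP (XaG * XmaG) ((1/2 : ℂ) • (XG * XG + XG))
  | r6 : relP (XmaG * XaG) ((1/2 : ℂ) • (XG * XG - XG))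
  | r7 : relP (XG * YG) (YG * XG)
  | r8 : relP (XG * XG * XG) XG
  | r9 : relP (YG * XaG) (XaG * YG - XaG)
  | r10 : relP (YG * XmaG) (XmaG * YG + XmaG)
  | r11 : relP (XbG * YG) (-XbG)
  | r12 : relP (YG * XbG) XbG
  | r13 : relP (XabG * (XG + YG)) (-XabG)
  | r14 : relP ((XG + YG) * XabG) XabG
  | r15 : relP (XG * XbG) (XbG * XG - XbG)
  | r16 : relP (XG * XabG) (XabG * XG + XabG)
  | r17 : relP (XaG * XbG) (-(XabG * YG))
  | r18 : relP (XbG * XaG) (-(XabG * YG) - XabG)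
  | r19 : relP (XmaG * XabG) (-(XbG * XG) + XbG)
  | r20 : relP (XabG * XmaG) (-(XbG * XG))
  | r21 : relP (XaG * XaG) 0
  | r22 : relP (XmaG * XmaG) 0
  | r23 : relP (XbG * XbG) 0
  | r24 : relP (XabG * XabG) 0
  | r25 : relP (XaG * XabG) 0
  | r26 : relP (XabG * XaG) 0
  | r27 : relP (XbG * XabG) 0
  | r28 : relP (XabG * XbG) 0
  | r29 : relP (XbG * XmaG) 0
  | r30 : relP (XmaG * XbG) 0

/-- The algebra `A_P`: the quotient of the free associative unital `ℂ`-algebra on six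
generators by the two-sided ideal generated by the defining relations. -/
abbrev AP := RingQuot relP

/-- The image of `x` in `A_P`. -/
def xP : AP := RingQuot.mkAlgHom ℂ relP XG
/-- The image of `y` in `A_P`. -/
def yP : AP := RingQuot.mkAlgHom ℂ relP YG
/-- The image of `x_α` in `A_P`. -/
def xaP : AP := RingQuot.mkAlgHom ℂ relP XaG
/-- The image of `x_{−α}` in `A_P`. -/
def xmaP : AP := RingQuot.mkAlgHom ℂ relP XmaG
/-- The image of `x_β` in `A_P`. -/
def xbP : AP := RingQuot.mkAlgHom ℂ relP XbG
/-- The image of `x_{α+β}` in `A_P`. -/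
def xabP : AP := RingQuot.mkAlgHom ℂ relP XabG

/-- Specification of the one-dimensional `A_P`-module structure on `ℂ` (type (i)):
`y` acts as multiplication by `λ₀` and `x, x_α, x_{−α}, x_β, x_{α+β}` act as `0`. -/
def Spec1 (l : ℂ) (ρ : AP →ₐ[ℂ] Module.End ℂ ℂ) : Prop :=
  ρ yP = l • (1 : Module.End ℂ ℂ) ∧ ρ xP = 0 ∧ ρ xaP = 0 ∧ ρ xmaP = 0 ∧
  ρ xbP = 0 ∧ ρ xabP = 0

/-- The basis vector `e⁺` of `ℂ²`. -/
def ePlus : Fin 2 → ℂ := ![1, 0]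
/-- The basis vector `e⁻` of `ℂ²`. -/
def eMinus : Fin 2 → ℂ := ![0, 1]

/-- Specification of the two-dimensional `A_P`-module structure on `ℂ²` (type (ii)). -/
def Spec2 (l : ℂ) (ρ : AP →ₐ[ℂ] Module.End ℂ (Fin 2 → ℂ)) : Prop :=
  ρ xP ePlus = ePlus ∧ ρ xP eMinus = -eMinus ∧
  ρ yP ePlus = (l - 1/2) • ePlus ∧ ρ yP eMinus = (l + 1/2) • eMinus ∧
  ρ xaP ePlus = 0 ∧ ρ xaP eMinus = ePlus ∧
  ρ xmaP ePlus = eMinus ∧ ρ xmaP eMinus = 0 ∧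
  ρ xbP = 0 ∧ ρ xabP = 0

/-- A representation `ρ` of `A_P` on a `ℂ`-vector space `V` is simple if `V ≠ 0` and the
only `ρ`-invariant subspaces of `V` are `⊥` and `⊤` (equivalently, `V` is a simple
left `A_P`-module). -/
def IsSimpleRep {V : Type} [AddCommGroup V] [Module ℂ V]
    (ρ : AP →ₐ[ℂ] Module.End ℂ V) : Prop :=
  (∃ v : V, v ≠ 0) ∧
  ∀ W : Submodule ℂ V, (∀ a : AP, ∀ w ∈ W, ρ a w ∈ W) → W = ⊥ ∨ W = ⊤

/-- Two representations of `A_P` are isomorphic if there is an `A_P`-equivariant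
`ℂ`-linear isomorphism between them. -/
def RepIso {V W : Type} [AddCommGroup V] [Module ℂ V] [AddCommGroup W] [Module ℂ W]
    (ρ : AP →ₐ[ℂ] Module.End ℂ V) (ρ' : AP →ₐ[ℂ] Module.End ℂ W) : Prop :=
  ∃ g : V ≃ₗ[ℂ] W, ∀ a : AP, ∀ v : V, g (ρ a v) = ρ' a (g v)

/-! Auxiliary constructions -/

/-- Values of generators for the one-dimensional representation (inside `ℂ`). -/
def val1 (l : ℂ) : Fin 6 → ℂ := ![0, l, 0, 0, 0, 0]

/-- The free-algebra map for the one-dimensional representation. -/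
def F1 (l : ℂ) : FreeAlgebra ℂ (Fin 6) →ₐ[ℂ] Module.End ℂ ℂ :=
  (Algebra.ofId ℂ (Module.End ℂ ℂ)).comp (FreeAlgebra.lift ℂ (val1 l))

@[simp] lemma val1_0 (l : ℂ) : val1 l 0 = 0 := rfl
@[simp] lemma val1_1 (l : ℂ) : val1 l 1 = l := rfl
@[simp] lemma val1_2 (l : ℂ) : val1 l 2 = 0 := rfl
@[simp] lemma val1_3 (l : ℂ) : val1 l 3 = 0 := rfl
@[simp] lemma val1_4 (l : ℂ) : val1 l 4 = 0 := rfl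
@[simp] lemma val1_5 (l : ℂ) : val1 l 5 = 0 := rfl

lemma F1_rel (l : ℂ) : ∀ ⦃a b : FreeAlgebra ℂ (Fin 6)⦄, relP a b → F1 l a = F1 l b := by
  intro a b r
  cases r <;>
    simp [F1, XG, YG, XaG, XmaG, XbG, XabG, map_mul, map_add, map_smul]

/-- The one-dimensional representation. -/
def rho1 (l : ℂ) : AP →ₐ[ℂ] Module.End ℂ ℂ :=
  RingQuot.liftAlgHom ℂ ⟨F1 l, F1_rel l⟩

/-- Matrix values of generators for the two-dimensional representation. -/
def val2 (l : ℂ) : Fin 6 → Matrix (Fin 2) (Fin 2) ℂ :=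
  ![!![1, 0; 0, -1], !![l - 1/2, 0; 0, l + 1/2], !![0, 1; 0, 0], !![0, 0; 1, 0], 0, 0]

/-- The free-algebra map for the two-dimensional representation. -/
def F2 (l : ℂ) : FreeAlgebra ℂ (Fin 6) →ₐ[ℂ] Module.End ℂ (Fin 2 → ℂ) :=
  (Matrix.toLinAlgEquiv' : Matrix (Fin 2) (Fin 2) ℂ ≃ₐ[ℂ] _).toAlgHom.comp
    (FreeAlgebra.lift ℂ (val2 l))

@[simp] lemma val2_0 (l : ℂ) : val2 l 0 = !![1, 0; 0, -1] := rfl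
@[simp] lemma val2_1 (l : ℂ) : val2 l 1 = !![l - 1/2, 0; 0, l + 1/2] := rfl
@[simp] lemma val2_2 (l : ℂ) : val2 l 2 = !![0, 1; 0, 0] := rfl
@[simp] lemma val2_3 (l : ℂ) : val2 l 3 = !![0, 0; 1, 0] := rfl
@[simp] lemma val2_4 (l : ℂ) : val2 l 4 = 0 := rfl
@[simp] lemma val2_5 (l : ℂ) : val2 l 5 = 0 := rfl

lemma F2_rel (l : ℂ) : ∀ ⦃a b : FreeAlgebra ℂ (Fin 6)⦄, relP a b → F2 l a = F2 l b := by
  intro a b r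
  cases r <;>
    · simp only [F2, AlgHom.comp_apply]
      congr 1
      simp only [XG, YG, XaG, XmaG, XbG, XabG, map_mul, map_add,
        map_sub, map_neg, map_smul, map_zero, FreeAlgebra.lift_ι_apply,
        val2_0, val2_1, val2_2, val2_3, val2_4, val2_5]
      ext i j
      fin_cases i <;> fin_cases j <;>
        simp [Matrix.mul_apply, Fin.sum_univ_two] <;> ring

/-- The two-dimensional representation. -/
def rho2 (l : ℂ) : AP →ₐ[ℂ] Module.End ℂ (Fin 2 → ℂ) :=
  RingQuot.liftAlgHom ℂ ⟨F2 l, F2_rel l⟩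

lemma decomp2 (v : Fin 2 → ℂ) : v = v 0 • ePlus + v 1 • eMinus := by
  funext i; fin_cases i <;> simp [ePlus, eMinus]

lemma ePlus_ne_zero : ePlus ≠ 0 := by
  intro h
  have := congrFun h 0
  simp [ePlus] at this

lemma simple2 {l : ℂ} {ρ : AP →ₐ[ℂ] Module.End ℂ (Fin 2 → ℂ)} (h : Spec2 l ρ) :
    IsSimpleRep ρ := by
  obtain ⟨hx1, hx2, hy1, hy2, ha1, ha2, hm1, hm2, hb, hab⟩ := h
  refine ⟨⟨ePlus, ePlus_ne_zero⟩, fun W hW => ?_⟩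
  by_cases hbot : W = ⊥
  · exact Or.inl hbot
  right
  obtain ⟨w, hwW, hw0⟩ := Submodule.exists_mem_ne_zero_of_ne_bot hbot
  have haw : ρ xaP w = w 1 • ePlus := by
    conv_lhs => rw [decomp2 w]
    simp [ha1, ha2]
  have hmw : ρ xmaP w = w 0 • eMinus := by
    conv_lhs => rw [decomp2 w]
    simp [hm1, hm2]
  have key : ePlus ∈ W ∧ eMinus ∈ W := by
    by_cases h0 : w 0 = 0
    · have h1 : w 1 ≠ 0 := by
        intro h1; apply hw0; rw [decomp2 w, h0, h1]; simp
      have hp : ePlus ∈ W := by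
        have := hW xaP w hwW
        rw [haw] at this
        have := W.smul_mem (w 1)⁻¹ this
        rwa [smul_smul, inv_mul_cancel₀ h1, one_smul] at this
      have hm : eMinus ∈ W := by
        have := hW xmaP ePlus hp
        rwa [hm1] at this
      exact ⟨hp, hm⟩
    · have hm : eMinus ∈ W := by
        have := hW xmaP w hwW
        rw [hmw] at this
        have := W.smul_mem (w 0)⁻¹ this
        rwa [smul_smul, inv_mul_cancel₀ h0, one_smul] at this
      have hp : ePlus ∈ W := by
        have := hW xaP eMinus hm
        rwa [ha2] at this
      exact ⟨hp, hm⟩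
  rw [eq_top_iff]
  intro v _
  rw [decomp2 v]
  exact W.add_mem (W.smul_mem _ key.1) (W.smul_mem _ key.2)

lemma spec2_scalar {l : ℂ} {ρ : AP →ₐ[ℂ] Module.End ℂ (Fin 2 → ℂ)} (h : Spec2 l ρ)
    (v : Fin 2 → ℂ) : ρ (yP + (1/2 : ℂ) • xP) v = l • v := by
  obtain ⟨hx1, hx2, hy1, hy2, _⟩ := h
  rw [map_add, map_smul]
  conv_lhs => rw [decomp2 v]
  simp only [LinearMap.add_apply, LinearMap.smul_apply, map_add, map_smul,
    hx1, hx2, hy1, hy2]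
  rw [decomp2 (l • v)]
  simp only [Pi.smul_apply, smul_eq_mul]
  module

/-- for each `λ₀ ∈ ℂ` there are simple `A_P`-module structures of
type (i) on `ℂ` and of type (ii) on `ℂ²` with the prescribed actions, and these modules
are pairwise non-isomorphic as `λ₀` and the type vary. -/
theorem stmt11 :
    (∀ l : ℂ, ∃ ρ : AP →ₐ[ℂ] Module.End ℂ ℂ, Spec1 l ρ ∧ IsSimpleRep ρ) ∧
    (∀ l : ℂ, ∃ ρ : AP →ₐ[ℂ] Module.End ℂ (Fin 2 → ℂ), Spec2 l ρ ∧ IsSimpleRep ρ) ∧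
    (∀ l l' : ℂ, ∀ (ρ : AP →ₐ[ℂ] Module.End ℂ ℂ) (ρ' : AP →ₐ[ℂ] Module.End ℂ ℂ),
      Spec1 l ρ → Spec1 l' ρ' → l ≠ l' → ¬ RepIso ρ ρ') ∧
    (∀ l l' : ℂ, ∀ (ρ : AP →ₐ[ℂ] Module.End ℂ (Fin 2 → ℂ))
        (ρ' : AP →ₐ[ℂ] Module.End ℂ (Fin 2 → ℂ)),
      Spec2 l ρ → Spec2 l' ρ' → l ≠ l' → ¬ RepIso ρ ρ') ∧
    (∀ l l' : ℂ, ∀ (ρ : AP →ₐ[ℂ] Module.End ℂ ℂ)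
        (ρ' : AP →ₐ[ℂ] Module.End ℂ (Fin 2 → ℂ)),
      Spec1 l ρ → Spec2 l' ρ' → ¬ RepIso ρ ρ') := by
  refine ⟨?_, ?_, ?_, ?_, ?_⟩
  · -- one-dimensional representations
    intro l
    refine ⟨rho1 l, ⟨?_, ?_, ?_, ?_, ?_, ?_⟩, ⟨⟨1, one_ne_zero⟩, fun W _ => ?_⟩⟩
    · show rho1 l (RingQuot.mkAlgHom ℂ relP YG) = _
      rw [rho1, RingQuot.liftAlgHom_mkAlgHom_apply]
      simp [F1, YG, Algebra.ofId_apply, Algebra.algebraMap_eq_smul_one]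
    · show rho1 l (RingQuot.mkAlgHom ℂ relP XG) = 0
      rw [rho1, RingQuot.liftAlgHom_mkAlgHom_apply]
      simp [F1, XG]
    · show rho1 l (RingQuot.mkAlgHom ℂ relP XaG) = 0
      rw [rho1, RingQuot.liftAlgHom_mkAlgHom_apply]
      simp [F1, XaG]
    · show rho1 l (RingQuot.mkAlgHom ℂ relP XmaG) = 0
      rw [rho1, RingQuot.liftAlgHom_mkAlgHom_apply]
      simp [F1, XmaG]
    · show rho1 l (RingQuot.mkAlgHom ℂ relP XbG) = 0
      rw [rho1, RingQuot.liftAlgHom_mkAlgHom_apply]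
      simp [F1, XbG]
    · show rho1 l (RingQuot.mkAlgHom ℂ relP XabG) = 0
      rw [rho1, RingQuot.liftAlgHom_mkAlgHom_apply]
      simp [F1, XabG]
    · -- simplicity of the 1-dimensional representation
      by_cases hbot : W = ⊥
      · exact Or.inl hbot
      right
      obtain ⟨w, hwW, hw0⟩ := Submodule.exists_mem_ne_zero_of_ne_bot hbot
      rw [eq_top_iff]
      intro c _
      have : c = (c * w⁻¹) • w := by
        rw [smul_eq_mul, inv_mul_cancel_right₀ hw0]
      rw [this]
      exact W.smul_mem _ hwW
  · -- two-dimensional representations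
    intro l
    have key : Spec2 l (rho2 l) := by
      refine ⟨?_, ?_, ?_, ?_, ?_, ?_, ?_, ?_, ?_, ?_⟩ <;>
        simp only [xP, yP, xaP, xmaP, xbP, xabP, rho2,
          RingQuot.liftAlgHom_mkAlgHom_apply, F2, AlgHom.comp_apply,
          FreeAlgebra.lift_ι_apply, XG, YG, XaG, XmaG, XbG, XabG,
          val2_0, val2_1, val2_2, val2_3, val2_4, val2_5,
          AlgEquiv.toAlgHom_eq_coe, AlgHom.coe_coe, map_zero] <;>
        first
        | rfl
        | (funext i
           fin_cases i <;>
             simp [Matrix.toLinAlgEquiv'_apply, Matrix.toLin'_apply, Matrix.mulVec,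
               dotProduct, Fin.sum_univ_two, ePlus, eMinus])
    exact ⟨rho2 l, key, simple2 key⟩
  · -- 1-dim vs 1-dim
    intro l l' ρ ρ' h h' hne ⟨g, hg⟩
    have h1 : ρ yP (1 : ℂ) = l • (1 : ℂ) := by rw [h.1]; simp
    have h2 : ρ' yP (g 1) = l' • g 1 := by rw [h'.1]; simp
    have := hg yP 1
    rw [h1, map_smul, h2] at this
    have hg1 : g (1 : ℂ) ≠ 0 := by
      simp [g.map_eq_zero_iff]
    rcases smul_eq_zero.mp (show (l - l') • g (1 : ℂ) = 0 by
      rw [sub_smul, this, sub_self]) with h | h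
    · exact hne (sub_eq_zero.mp h)
    · exact hg1 h
  · -- 2-dim vs 2-dim
    intro l l' ρ ρ' h h' hne ⟨g, hg⟩
    have := hg (yP + (1/2 : ℂ) • xP) ePlus
    rw [spec2_scalar h, map_smul, spec2_scalar h'] at this
    have hg1 : g ePlus ≠ 0 := by
      simp [g.map_eq_zero_iff, ePlus_ne_zero]
    rcases smul_eq_zero.mp (show (l - l') • g ePlus = 0 by
      rw [sub_smul, this, sub_self]) with h | h
    · exact hne (sub_eq_zero.mp h)
    · exact hg1 h
  · -- 1-dim vs 2-dim: dimension count
    intro l l' ρ ρ' _ _ ⟨g, _⟩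
    have := g.finrank_eq
    rw [Module.finrank_self, Module.finrank_fin_fun] at this
    exact absurd this (by norm_num)
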